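/- arXiv:1803.00281 — 2 statements merged into one kernel-verified Lean document; each statement's English description precedes it below -/
import Mathlib

section
/- Let n ≥ 4 and let D be obtained from the complete digraph ↔K_n by deleting the arcs of ⌊n/2⌋ vertex-disjoint directed 2-cycles. Then κ_2(D) = n−2, and for every arc e of D, κ_2(D−e) ≤ n−3. -/
/-- A digraph on vertex type `V`: a loopless binary arc relation. -/
structure Dgraph (V : Type) where
  Arc : V → V → Prop
  loopless : ∀ v, ¬ Arc v v

namespace Dgraph

variable {V : Type}

/-- A digraph is strong (strongly connected) if every vertex reaches every vertex. -/
def IsStrong (D : Dgraph V) : Prop := ∀ u v : V, Relation.ReflTransGen D.Arc u v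

/-- A strong subgraph of `D`: a vertex set together with an arc relation contained
in `D`'s arcs, whose arcs stay inside the vertex set, and which is strongly
connected on its vertex set. -/
structure StrongSub (D : Dgraph V) where
  verts : Set V
  Arc : V → V → Prop
  arc_sub : ∀ u v, Arc u v → D.Arc u v
  arc_mem : ∀ u v, Arc u v → u ∈ verts ∧ v ∈ verts
  strong : ∀ u ∈ verts, ∀ v ∈ verts, Relation.ReflTransGen Arc u v

/-- `κ_S(D)`: the maximum number of pairwise internally disjoint strong subgraphs
of `D` containing `S` (they share exactly the vertices of `S` and no arcs). -/
noncomputable def kappaS (D : Dgraph V) (S : Set V) : ℕ :=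
  sSup {p : ℕ | ∃ f : Fin p → StrongSub D,
    (∀ i, S ⊆ (f i).verts) ∧
    (∀ i j, i ≠ j → (f i).verts ∩ (f j).verts = S) ∧
    (∀ i j, i ≠ j → ∀ u v, ¬ ((f i).Arc u v ∧ (f j).Arc u v))}

/-- The strong subgraph `k`-connectivity `κ_k(D)`. -/
noncomputable def kappa [Fintype V] (D : Dgraph V) (k : ℕ) : ℕ :=
  sInf {m : ℕ | ∃ S : Finset V, S.card = k ∧ kappaS D ↑S = m}

/-- The number of arcs of a digraph. -/
noncomputable def arcCount (D : Dgraph V) : ℕ :=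
  Nat.card {p : V × V // D.Arc p.1 p.2}

/-- Delete the arc `e` from `D`. -/
def deleteArc (D : Dgraph V) (e : V × V) : Dgraph V where
  Arc u v := D.Arc u v ∧ (u, v) ≠ e
  loopless v h := D.loopless v h.1

/-- `D` is minimally strong subgraph `(k,ℓ)`-connected. -/
noncomputable def MinSSC [Fintype V] (D : Dgraph V) (k ℓ : ℕ) : Prop :=
  ℓ ≤ kappa D k ∧ ∀ e : V × V, D.Arc e.1 e.2 → kappa (deleteArc D e) k ≤ ℓ - 1

/-- Minimum out-degree `δ⁺(D)`. -/
noncomputable def minOutDeg [Fintype V] (D : Dgraph V) : ℕ :=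
  sInf (Set.range fun v => Nat.card {w : V // D.Arc v w})

/-- Minimum in-degree `δ⁻(D)`. -/
noncomputable def minInDeg [Fintype V] (D : Dgraph V) : ℕ :=
  sInf (Set.range fun v => Nat.card {w : V // D.Arc w v})

/-- The subdigraph of `D` induced on a vertex set `W`. -/
def induce (D : Dgraph V) (W : Set V) : Dgraph W where
  Arc u v := D.Arc u v
  loopless v h := D.loopless v h

/-- The strong vertex-connectivity `κ(D)`: the minimum number of vertices whose
removal leaves a non-strong digraph, or `n - 1` if there is no such set. -/
noncomputable def vertConn [Fintype V] (D : Dgraph V) : ℕ :=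
  sInf ({Fintype.card V - 1} ∪
    {m : ℕ | ∃ Q : Finset V, Q.card = m ∧ ¬ IsStrong (D.induce (↑Q : Set V)ᶜ)})

/-- `D` is symmetric if the reverse of every arc is an arc. -/
def IsSymmetric (D : Dgraph V) : Prop := ∀ u v, D.Arc u v → D.Arc v u

/-- The underlying undirected (simple) graph of a digraph. -/
def underlying (D : Dgraph V) : SimpleGraph V where
  Adj u v := D.Arc u v ∨ D.Arc v u
  symm := ⟨by intro u v h; tauto⟩
  loopless := ⟨by intro v h; rcases h with h | h <;> exact D.loopless v h⟩

/-- The minimum number of arcs of a minimally strong subgraph `(k,ℓ)`-connected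
digraph on `n` vertices. -/
noncomputable def fMin (n k ℓ : ℕ) : ℕ :=
  sInf {m : ℕ | ∃ D : Dgraph (Fin n), MinSSC D k ℓ ∧ arcCount D = m}

/-- The maximum number of arcs of a minimally strong subgraph `(k,ℓ)`-connected
digraph on `n` vertices. -/
noncomputable def FMax (n k ℓ : ℕ) : ℕ :=
  sSup {m : ℕ | ∃ D : Dgraph (Fin n), MinSSC D k ℓ ∧ arcCount D = m}

end Dgraph

/-!
Upper bounds: in a family of internally disjoint strong subgraphs containing `x ≠ y`, every
member has an arc leaving `x` and one entering `y`, and arc-disjointness makes these arcs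
distinct. So `κ_S(D)` is at most the out-degree of `x` and the in-degree of `y`. If `{x, y}` is a
deleted 2-cycle, `x` has out-degree `n - 2`. In `D - ab` at most one vertex avoids the deleted
2-cycles, so `a` or `b` lies on one, and that endpoint has out- resp. in-degree `n - 3`.

Lower bound: for `x ≠ y` use, for every other vertex `z`, the walk `x z y` traversed both ways.
This only fails for the partners `x'` of `x` and `y'` of `y`: the slot of `x'` takes the 2-cycle
on `x y`, and the slot of `y'` the walk `x y' x' y`, which uses the vertex `x'` left free.
-/

theorem Function.Injective.mem_range_or_mem_range {V β : Type*} [Fintype V] [Fintype β]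
    {g : β → V} (hg : g.Injective) (hcard : Fintype.card V ≤ Fintype.card β + 1) {a b : V}
    (hab : a ≠ b) : a ∈ Set.range g ∨ b ∈ Set.range g := by
  classical
  by_contra! h
  have ha : a ∉ insert b (Finset.univ.image g) := by simpa [hab] using h.1
  have hb : b ∉ Finset.univ.image g := by simpa using h.2
  have := (insert a (insert b (Finset.univ.image g))).card_le_univ
  rw [Finset.card_insert_of_notMem ha, Finset.card_insert_of_notMem hb,
    Finset.card_image_of_injective _ hg, Finset.card_univ] at this
  omega

theorem Nat.card_subtype_le_card_sub_card {V : Type*} [Fintype V] {P : V → Prop}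
    {T : Finset V} (h : ∀ t, P t → t ∉ T) :
    Nat.card {t // P t} ≤ Fintype.card V - T.card := by
  classical
  calc Nat.card {t // P t} ≤ Nat.card {t // t ∈ Tᶜ} :=
        Nat.card_le_card_of_injective (fun t => ⟨t.1, Finset.mem_compl.2 (h _ t.2)⟩)
          fun s t hst => Subtype.ext (by simpa using hst)
    _ = Fintype.card V - T.card := by
        rw [Nat.card_eq_fintype_card, Fintype.card_coe, Finset.card_compl]

theorem List.eq_nil_of_infix_cons_append {α : Type*} {x y : α} {m : List α} (hx : x ∉ m)
    (hy : y ∉ m) (hxy : x ≠ y)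
    (h : [x, y] <:+: x :: (m ++ [y]) ∨ [y, x] <:+: x :: (m ++ [y])) : m = [] := by
  have hx' : x ∉ m ++ [y] := by simpa [hxy] using hx
  rcases h with h | h <;> rcases List.infix_cons_iff.1 h with h | h
  · cases m with
    | nil => rfl
    | cons c m => simp_all [List.cons_prefix_cons]
  · exact absurd (h.subset (by simp)) hx'
  · exact absurd (List.cons_prefix_cons.1 h).1 hxy.symm
  · exact absurd (h.subset (by simp)) hx'

namespace Dgraph

variable {V : Type} {D : Dgraph V}

theorem ne_of_arc {u v : V} (h : D.Arc u v) : u ≠ v :=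
  fun huv => D.loopless u (huv ▸ h)

structure IsInternallyDisjoint {ι : Type*} (S : Set V) (f : ι → D.StrongSub) : Prop where
  subset_verts : ∀ i, S ⊆ (f i).verts
  verts_inter : ∀ i j, i ≠ j → (f i).verts ∩ (f j).verts = S
  arc_disjoint : ∀ i j, i ≠ j → ∀ u v, ¬ ((f i).Arc u v ∧ (f j).Arc u v)

namespace IsInternallyDisjoint

variable {ι κ : Type*} {S : Set V} {f : ι → D.StrongSub}

theorem comp (hf : IsInternallyDisjoint S f) {e : κ → ι} (he : Function.Injective e) :
    IsInternallyDisjoint S (f ∘ e) :=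
  ⟨fun i => hf.subset_verts (e i), fun _ _ hij => hf.verts_inter _ _ (he.ne hij),
    fun _ _ hij => hf.arc_disjoint _ _ (he.ne hij)⟩

theorem injective_of_arc (hf : IsInternallyDisjoint S f) {a : ι → V × V}
    (ha : ∀ i, (f i).Arc (a i).1 (a i).2) : Function.Injective a := by
  intro i j hij
  by_contra hne
  exact hf.arc_disjoint i j hne _ _ ⟨ha i, hij ▸ ha j⟩

variable {x y : V}

theorem natCard_le_outDeg [Finite V] (hf : IsInternallyDisjoint S f) (hx : x ∈ S) (hy : y ∈ S)
    (hxy : x ≠ y) : Nat.card ι ≤ Nat.card {t // D.Arc x t} := by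
  have hout : ∀ i, ∃ t, (f i).Arc x t := fun i =>
    ((f i).strong x (hf.subset_verts i hx) y (hf.subset_verts i hy)).cases_head.resolve_left
      hxy |>.imp fun _ h => h.1
  choose t ht using hout
  have ht_inj := hf.injective_of_arc (a := fun i => (x, t i)) ht
  exact Nat.card_le_card_of_injective (fun i => ⟨t i, (f i).arc_sub _ _ (ht i)⟩)
    fun i j h => ht_inj (by simpa using h)

theorem natCard_le_inDeg [Finite V] (hf : IsInternallyDisjoint S f) (hx : x ∈ S) (hy : y ∈ S)
    (hxy : x ≠ y) : Nat.card ι ≤ Nat.card {t // D.Arc t y} := by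
  have hin : ∀ i, ∃ t, (f i).Arc t y := fun i =>
    ((f i).strong x (hf.subset_verts i hx) y (hf.subset_verts i hy)).cases_tail.resolve_left
      hxy.symm |>.imp fun _ h => h.2
  choose t ht using hin
  have ht_inj := hf.injective_of_arc (a := fun i => (t i, y)) ht
  exact Nat.card_le_card_of_injective (fun i => ⟨t i, (f i).arc_sub _ _ (ht i)⟩)
    fun i j h => ht_inj (by simpa using h)

end IsInternallyDisjoint

theorem kappaS_eq_sSup (S : Set V) :
    D.kappaS S = sSup {p | ∃ f : Fin p → D.StrongSub, IsInternallyDisjoint S f} := by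
  simp only [kappaS]
  congr
  ext p
  exact exists_congr fun f =>
    ⟨fun ⟨h₁, h₂, h₃⟩ => ⟨h₁, h₂, h₃⟩, fun ⟨h₁, h₂, h₃⟩ => ⟨h₁, h₂, h₃⟩⟩

section kappaS

variable {S : Set V} {x y : V}

theorem kappaS_le_outDeg [Finite V] (hx : x ∈ S) (hy : y ∈ S) (hxy : x ≠ y) :
    D.kappaS S ≤ Nat.card {t // D.Arc x t} := by
  rw [kappaS_eq_sSup]
  refine csSup_le' ?_
  rintro p ⟨f, hf⟩
  simpa using hf.natCard_le_outDeg hx hy hxy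

theorem kappaS_le_inDeg [Finite V] (hx : x ∈ S) (hy : y ∈ S) (hxy : x ≠ y) :
    D.kappaS S ≤ Nat.card {t // D.Arc t y} := by
  rw [kappaS_eq_sSup]
  refine csSup_le' ?_
  rintro p ⟨f, hf⟩
  simpa using hf.natCard_le_inDeg hx hy hxy

theorem le_kappaS [Finite V] {ι : Type*} [Finite ι] {f : ι → D.StrongSub}
    (hf : IsInternallyDisjoint S f) (hx : x ∈ S) (hy : y ∈ S) (hxy : x ≠ y) :
    Nat.card ι ≤ D.kappaS S := by
  rw [kappaS_eq_sSup]
  refine le_csSup ⟨Nat.card {t // D.Arc x t}, ?_⟩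
    ⟨_, hf.comp (Finite.equivFin ι).symm.injective⟩
  rintro p ⟨f, hf⟩
  simpa using hf.natCard_le_outDeg hx hy hxy

end kappaS

section kappa

variable [Fintype V] {x y : V}

theorem kappa_le_kappaS {k : ℕ} {S : Finset V} (hS : S.card = k) : D.kappa k ≤ D.kappaS S :=
  Nat.sInf_le ⟨S, hS, rfl⟩

theorem le_kappa_two {m : ℕ} (hV : 2 ≤ Fintype.card V)
    (h : ∀ x y : V, x ≠ y → m ≤ D.kappaS {x, y}) : m ≤ D.kappa 2 := by
  classical
  obtain ⟨S₀, -, hS₀⟩ := Finset.exists_subset_card_eq (s := Finset.univ) hV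
  refine le_csInf ⟨_, S₀, hS₀, rfl⟩ ?_
  rintro _ ⟨S, hS, rfl⟩
  obtain ⟨x, y, hxy, rfl⟩ := Finset.card_eq_two.1 hS
  rw [Finset.coe_pair]
  exact h x y hxy

theorem kappa_two_le_of_outNeighbors {T : Finset V} (hxy : x ≠ y)
    (hT : ∀ t, D.Arc x t → t ∉ T) : D.kappa 2 ≤ Fintype.card V - T.card := by
  classical
  calc D.kappa 2 ≤ D.kappaS ({x, y} : Finset V) := kappa_le_kappaS (Finset.card_pair hxy)
    _ ≤ Nat.card {t // D.Arc x t} := kappaS_le_outDeg (by simp) (by simp) hxy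
    _ ≤ Fintype.card V - T.card := Nat.card_subtype_le_card_sub_card hT

theorem kappa_two_le_of_inNeighbors {T : Finset V} (hxy : x ≠ y)
    (hT : ∀ t, D.Arc t y → t ∉ T) : D.kappa 2 ≤ Fintype.card V - T.card := by
  classical
  calc D.kappa 2 ≤ D.kappaS ({x, y} : Finset V) := kappa_le_kappaS (Finset.card_pair hxy)
    _ ≤ Nat.card {t // D.Arc t y} := kappaS_le_inDeg (by simp) (by simp) hxy
    _ ≤ Fintype.card V - T.card := Nat.card_subtype_le_card_sub_card hT

theorem kappa_two_le_of_not_arc (hxy : x ≠ y) (h : ¬ D.Arc x y) :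
    D.kappa 2 ≤ Fintype.card V - 2 := by
  classical
  have hT : ∀ t, D.Arc x t → t ∉ ({x, y} : Finset V) := fun t ht => by
    simp only [Finset.mem_insert, Finset.mem_singleton, not_or]
    exact ⟨(ne_of_arc ht).symm, fun hty => h (hty ▸ ht)⟩
  simpa only [Finset.card_pair hxy] using kappa_two_le_of_outNeighbors hxy hT

theorem kappa_two_deleteArc_le {a b : V} (hab : D.Arc a b)
    (h : (∃ a', a' ≠ a ∧ ¬ D.Arc a a') ∨ ∃ b', b' ≠ b ∧ ¬ D.Arc b' b) :
    (D.deleteArc (a, b)).kappa 2 ≤ Fintype.card V - 3 := by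
  classical
  rcases h with ⟨a', ha'a, ha'⟩ | ⟨b', hb'b, hb'⟩
  · have hcard : ({a, a', b} : Finset V).card = 3 :=
      Finset.card_eq_three.2 ⟨a, a', b, ha'a.symm, ne_of_arc hab, fun h => ha' (h ▸ hab), rfl⟩
    have hT : ∀ t, (D.deleteArc (a, b)).Arc a t → t ∉ ({a, a', b} : Finset V) :=
      fun t ⟨ht, htb⟩ => by
        simp only [Finset.mem_insert, Finset.mem_singleton, not_or]
        exact ⟨(ne_of_arc ht).symm, fun h => ha' (h ▸ ht), fun h => htb (h ▸ rfl)⟩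
    simpa only [hcard] using kappa_two_le_of_outNeighbors ha'a.symm hT
  · have hcard : ({b', b, a} : Finset V).card = 3 :=
      Finset.card_eq_three.2
        ⟨b', b, a, hb'b, fun h => hb' (h ▸ hab), (ne_of_arc hab).symm, rfl⟩
    have hT : ∀ t, (D.deleteArc (a, b)).Arc t b → t ∉ ({b', b, a} : Finset V) :=
      fun t ⟨ht, hta⟩ => by
        simp only [Finset.mem_insert, Finset.mem_singleton, not_or]
        exact ⟨fun h => hb' (h ▸ ht), ne_of_arc ht, fun h => hta (h ▸ rfl)⟩
    simpa only [hcard] using kappa_two_le_of_inNeighbors hb'b hT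

end kappa

def StrongSub.ofSymmWalk (l : List V) (hl : l.IsChain fun u v => D.Arc u v ∧ D.Arc v u) :
    D.StrongSub where
  verts := {v | v ∈ l}
  Arc u v := [u, v] <:+: l ∨ [v, u] <:+: l
  arc_sub u v h := h.elim (fun h => (List.isChain_pair.1 (hl.infix h)).1)
    fun h => (List.isChain_pair.1 (hl.infix h)).2
  arc_mem u v h := by
    rcases h with h | h <;> exact ⟨h.subset (by simp), h.subset (by simp)⟩
  strong := by
    set step : V → V → Prop := fun u v => [u, v] <:+: l ∨ [v, u] <:+: l
    have hstep : l.IsChain step := List.isChain_iff_forall_rel_of_append_cons_cons.2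
      fun a b l₁ l₂ h => Or.inl ⟨l₁, l₂, by simp [h]⟩
    intro u hu v hv
    cases l with
    | nil => simp at hu
    | cons a t =>
      have from_head := hstep.induction (Relation.ReflTransGen step a) _
        (fun _ _ h ih => ih.tail h) fun _ => .refl
      have to_head := hstep.induction (fun w => Relation.ReflTransGen step w a) _
        (fun _ _ h ih => ih.head h.symm) fun _ => .refl
      exact (to_head u hu).trans (from_head v hv)

theorem isInternallyDisjoint_ofSymmWalk {ι : Type*} {x y : V} (hxy : x ≠ y)
    (mid : ι → List V) (hx : ∀ i, x ∉ mid i) (hy : ∀ i, y ∉ mid i)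
    (hdisj : Pairwise fun i j => (mid i).Disjoint (mid j))
    (hnil : {i | mid i = []}.Subsingleton)
    (hwalk : ∀ i, (x :: (mid i ++ [y])).IsChain fun u v => D.Arc u v ∧ D.Arc v u) :
    IsInternallyDisjoint {x, y} fun i => StrongSub.ofSymmWalk _ (hwalk i) := by
  have hverts : ∀ i j, i ≠ j →
      {v | v ∈ x :: (mid i ++ [y])} ∩ {v | v ∈ x :: (mid j ++ [y])} = ({x, y} : Set V) :=
    fun i j hij => by
      ext v
      simp only [Set.mem_inter_iff, Set.mem_ofPred_eq, List.mem_cons, List.mem_append,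
        Set.mem_insert_iff, Set.mem_singleton_iff]
      have := @hdisj i j hij v
      tauto
  refine ⟨fun i => by simp [StrongSub.ofSymmWalk, Set.insert_subset_iff], hverts, ?_⟩
  rintro i j hij u v ⟨hi, hj⟩
  have hu : u ∈ ({x, y} : Set V) := hverts i j hij ▸
    ⟨(StrongSub.arc_mem _ u v hi).1, (StrongSub.arc_mem _ u v hj).1⟩
  have hv : v ∈ ({x, y} : Set V) := hverts i j hij ▸
    ⟨(StrongSub.arc_mem _ u v hi).2, (StrongSub.arc_mem _ u v hj).2⟩
  have huv := ne_of_arc (StrongSub.arc_sub _ u v hi)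
  simp only [Set.mem_insert_iff, Set.mem_singleton_iff] at hu hv
  have hstep : ∀ k, (StrongSub.ofSymmWalk _ (hwalk k)).Arc u v → mid k = [] := by
    intro k hk
    refine List.eq_nil_of_infix_cons_append (hx k) (hy k) hxy ?_
    rcases hu with rfl | rfl <;> rcases hv with rfl | rfl
    · exact absurd rfl huv
    · exact hk
    · exact hk.symm
    · exact absurd rfl huv
  exact hij (hnil (hstep i hi) (hstep j hj))

def completeWithout (M : Set (V × V)) : Dgraph V :=
  ⟨fun u v => u ≠ v ∧ (u, v) ∉ M, fun _ h => h.1 rfl⟩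

structure IsDisjointTwoCycles (M : Set (V × V)) : Prop where
  symm {u v : V} : (u, v) ∈ M → (v, u) ∈ M
  unique {u v w : V} : (u, v) ∈ M → (u, w) ∈ M → v = w

namespace IsDisjointTwoCycles

variable {M : Set (V × V)}

theorem arc_and_arc_iff (hM : IsDisjointTwoCycles M) {u v : V} :
    (completeWithout M).Arc u v ∧ (completeWithout M).Arc v u ↔ u ≠ v ∧ (u, v) ∉ M :=
  ⟨fun h => h.1, fun ⟨huv, h⟩ => ⟨⟨huv, h⟩, huv.symm, fun h' => h (hM.symm h')⟩⟩

theorem sub_two_le_kappaS_of_partner [Fintype V] (hM : IsDisjointTwoCycles M) {x y x' : V}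
    (hxy : x ≠ y)
    (hx' : (∃ y', (y, y') ∈ M ∧ y' ≠ y ∧ y' ≠ x) →
      (x, x') ∈ M ∧ x' ≠ x ∧ x' ≠ y) :
    Fintype.card V - 2 ≤ (completeWithout M).kappaS {x, y} := by
  classical
  let mid : {z // z ∈ ({x, y} : Finset V)ᶜ} → List V := fun z =>
    if (x, z.1) ∈ M then [] else if (y, z.1) ∈ M then [z.1, x'] else [z.1]
  have hz : ∀ z : {z // z ∈ ({x, y} : Finset V)ᶜ}, z.1 ≠ x ∧ z.1 ≠ y := fun z => by
    simpa [not_or] using z.2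
  have hmid : ∀ z, x ∉ mid z ∧ y ∉ mid z := by
    intro z
    have := hz z
    simp only [mid]
    split_ifs <;> grind
  have hdisj : Pairwise fun z z' => (mid z).Disjoint (mid z') := by
    intro z z' hzz'
    have := hz z
    have := hz z'
    simp only [mid]
    split_ifs <;> simp <;> grind [Subtype.ext_iff, hM.unique]
  have hmid_nil : ∀ z, mid z = [] ↔ (x, z.1) ∈ M := fun z => by
    simp only [mid]
    split_ifs <;> simp [*]
  have hnil : {z | mid z = []}.Subsingleton := fun z hz z' hz' =>
    Subtype.ext (hM.unique ((hmid_nil z).1 hz) ((hmid_nil z').1 hz'))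
  -- Uniqueness of partners keeps every step off `M`, e.g. `(y', x') ∉ M` as `y'` pairs with `y`.
  have hwalk : ∀ z, (x :: (mid z ++ [y])).IsChain
      fun u v => (completeWithout M).Arc u v ∧ (completeWithout M).Arc v u := by
    intro z
    have := hz z
    simp only [mid]
    split_ifs <;> simp [hM.arc_and_arc_iff] <;> grind [hM.unique, hM.symm]
  have hle := le_kappaS (isInternallyDisjoint_ofSymmWalk hxy mid (fun z => (hmid z).1)
    (fun z => (hmid z).2) hdisj hnil hwalk) (by simp) (by simp) hxy
  rwa [Nat.card_eq_fintype_card, Fintype.card_coe, Finset.card_compl, Finset.card_pair hxy] at hle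

theorem sub_two_le_kappaS [Fintype V] (hM : IsDisjointTwoCycles M) {x y : V} (hxy : x ≠ y) :
    Fintype.card V - 2 ≤ (completeWithout M).kappaS {x, y} := by
  by_cases hx : ∃ x', (x, x') ∈ M ∧ x' ≠ x ∧ x' ≠ y
  · obtain ⟨x', hx'⟩ := hx
    exact hM.sub_two_le_kappaS_of_partner hxy fun _ => hx'
  by_cases hy : ∃ y', (y, y') ∈ M ∧ y' ≠ y ∧ y' ≠ x
  · obtain ⟨y', hy'⟩ := hy
    rw [Set.pair_comm]
    exact hM.sub_two_le_kappaS_of_partner hxy.symm fun _ => hy'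
  · exact hM.sub_two_le_kappaS_of_partner (x' := x) hxy fun h => absurd h hy

theorem sub_two_le_kappa_two [Fintype V] (hM : IsDisjointTwoCycles M)
    (hV : 2 ≤ Fintype.card V) : Fintype.card V - 2 ≤ (completeWithout M).kappa 2 :=
  le_kappa_two hV fun _ _ hxy => hM.sub_two_le_kappaS hxy

end IsDisjointTwoCycles

theorem isDisjointTwoCycles_range_swap {α : Type*} {g : α ⊕ α → V} (hg : g.Injective) :
    IsDisjointTwoCycles (Set.range fun s => (g s, g s.swap)) where
  symm := by
    rintro u v ⟨s, hs⟩
    exact ⟨s.swap, by simpa [eq_comm, and_comm] using hs⟩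
  unique := by
    rintro u v w ⟨s, hs⟩ ⟨t, ht⟩
    simp only [Prod.mk.injEq] at hs ht
    obtain rfl : s = t := hg (hs.1.trans ht.1.symm)
    exact hs.2.symm.trans ht.2

end Dgraph

/-- For `n ≥ 4`, the digraph obtained from the complete digraph on `n` vertices
by deleting `⌊n/2⌋` vertex-disjoint directed 2-cycles satisfies `κ₂(D) = n - 2`,
and `κ₂(D - e) ≤ n - 3` for every arc `e` of `D`. The 2-cycles are on the pairs
`{g (inl i), g (inr i)}`, `i < ⌊n/2⌋`, with `g` injective. -/
theorem stmt10 {V : Type} [Fintype V] (n : ℕ)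
    (hn : Fintype.card V = n) (h4 : 4 ≤ n)
    (g : Fin (n / 2) ⊕ Fin (n / 2) → V) (hg : Function.Injective g) :
    let M : Set (V × V) := {p | ∃ i : Fin (n / 2),
      p = (g (Sum.inl i), g (Sum.inr i)) ∨ p = (g (Sum.inr i), g (Sum.inl i))}
    let D : Dgraph V := ⟨fun u v => u ≠ v ∧ (u, v) ∉ M, fun v h => h.1 rfl⟩
    D.kappa 2 = n - 2 ∧
      ∀ e : V × V, D.Arc e.1 e.2 → (D.deleteArc e).kappa 2 ≤ n - 3 := by
  intro M D
  subst hn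
  have hM : M = Set.range fun s => (g s, g s.swap) := by
    ext p
    simp [M, Sum.exists, eq_comm, exists_or]
  have hD : D = Dgraph.completeWithout (Set.range fun s => (g s, g s.swap)) := hM ▸ rfl
  have hpair : ∀ s, ¬ D.Arc (g s) (g s.swap) := fun s h => h.2 (hM ▸ ⟨s, rfl⟩)
  have hne : ∀ s, g s ≠ g s.swap := fun s => hg.ne (by cases s <;> simp)
  refine ⟨le_antisymm ?_ ?_, fun ⟨a, b⟩ hab => Dgraph.kappa_two_deleteArc_le hab ?_⟩
  · exact Dgraph.kappa_two_le_of_not_arc (hne (.inl ⟨0, by omega⟩)) (hpair _)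
  · exact hD ▸ (Dgraph.isDisjointTwoCycles_range_swap hg).sub_two_le_kappa_two (by omega)
  · rcases hg.mem_range_or_mem_range (by simp only [Fintype.card_sum, Fintype.card_fin]; omega)
      (Dgraph.ne_of_arc hab) with ⟨s, rfl⟩ | ⟨s, rfl⟩
    · exact .inl ⟨g s.swap, (hne s).symm, hpair s⟩
    · exact .inr ⟨g s.swap, (hne s).symm, by simpa using hpair s.swap⟩
end

section
/- Every minimally strong subgraph (n,ℓ)-connected digraph on n vertices has at most 2ℓ(n−1) arcs, i.e., F(n,n,ℓ) ≤ 2ℓ(n−1). -/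
/-!
Take `ℓ` arc-disjoint strong spanning subdigraphs of `D`. Each contains a strong spanning
subdigraph with at most `2(n-1)` arcs: the union of an out-branching and an in-branching
rooted at a common vertex. If some arc of `D` lay in none of these sparse subdigraphs, they
would still witness `κ_n ≥ ℓ` after deleting that arc, against minimality. Hence the `ℓ`
sparse subdigraphs cover all arcs, and there are at most `2ℓ(n-1)` of them.
-/

namespace Relation

variable {α : Type*} {A : α → α → Prop}

def NSteps (A : α → α → Prop) : ℕ → α → α → Prop
  | 0 => Eq
  | k + 1 => fun u v => ∃ w, NSteps A k u w ∧ A w v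

theorem ReflTransGen.exists_nSteps {u v : α} (h : ReflTransGen A u v) : ∃ k, NSteps A k u v := by
  induction h with
  | refl => exact ⟨0, rfl⟩
  | tail _ hwv ih =>
    obtain ⟨k, hk⟩ := ih
    exact ⟨k + 1, _, hk, hwv⟩

theorem exists_branching [Finite α] {r : α} (h : ∀ v, ReflTransGen A r v) :
    ∃ T ≤ A, (∀ v, ReflTransGen T r v) ∧
      {p : α × α | T p.1 p.2}.ncard ≤ Nat.card α - 1 := by
  classical
  let d : α → ℕ := fun v => Nat.find (h v).exists_nSteps
  have hparent : ∀ v, v ≠ r → ∃ w, A w v ∧ d w < d v := by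
    intro v hv
    have hspec : NSteps A (d v) r v := Nat.find_spec (h v).exists_nSteps
    obtain ⟨k, hk⟩ : ∃ k, d v = k + 1 :=
      Nat.exists_eq_succ_of_ne_zero fun h0 => hv (by rw [h0] at hspec; exact hspec.symm)
    rw [hk] at hspec
    obtain ⟨w, hw, hwv⟩ := hspec
    exact ⟨w, hwv, hk ▸ Nat.lt_succ_of_le (Nat.find_min' _ hw)⟩
  choose par hparA hpard using hparent
  refine ⟨fun u v => ∃ h : v ≠ r, u = par v h, ?_, ?_, ?_⟩
  · rintro u v ⟨hv, rfl⟩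
    exact hparA v hv
  · -- the distance from `r` strictly drops along parents
    intro v
    induction hdv : d v using Nat.strong_induction_on generalizing v with
    | _ k ih =>
      by_cases hv : v = r
      · subst hv; rfl
      · exact (ih _ (hdv ▸ hpard v hv) _ rfl).tail ⟨hv, rfl⟩
  · calc {p : α × α | ∃ h : p.2 ≠ r, p.1 = par p.2 h}.ncard
          ≤ ({r}ᶜ : Set α).ncard := by
          refine Set.ncard_le_ncard_of_injOn Prod.snd (fun p ⟨hp, _⟩ => hp) ?_
          rintro ⟨u, v⟩ ⟨hv, hu⟩ ⟨u', v'⟩ ⟨hv', hu'⟩ (rfl : v = v')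
          exact Prod.ext (hu.trans hu'.symm) rfl
      _ = Nat.card α - 1 := by
          rw [Set.ncard_compl, Set.ncard_singleton]

theorem exists_sparse_strong [Finite α] (h : ∀ u v, ReflTransGen A u v) :
    ∃ T ≤ A, (∀ u v, ReflTransGen T u v) ∧
      {p : α × α | T p.1 p.2}.ncard ≤ 2 * (Nat.card α - 1) := by
  cases isEmpty_or_nonempty α with
  | inl _ => exact ⟨A, le_rfl, h, by simp [Set.eq_empty_of_isEmpty]⟩
  | inr hne =>
    obtain ⟨r⟩ := hne
    obtain ⟨Tout, hTout, hrout, hcout⟩ := exists_branching (h r)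
    obtain ⟨Tin, hTin, hrin, hcin⟩ :=
      exists_branching (A := Function.swap A) fun v => reflTransGen_swap.mpr (h v r)
    refine ⟨Tout ⊔ Function.swap Tin, sup_le hTout fun u v huv => hTin v u huv, ?_, ?_⟩
    · intro u v
      exact (ReflTransGen.mono (fun _ _ => Or.inr) _ _ (reflTransGen_swap.mp (hrin u))).trans
        (ReflTransGen.mono (fun _ _ => Or.inl) _ _ (hrout v))
    · calc {p : α × α | (Tout ⊔ Function.swap Tin) p.1 p.2}.ncard
            = ({p : α × α | Tout p.1 p.2} ∪ Prod.swap '' {p | Tin p.1 p.2}).ncard := by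
              rw [Set.image_swap_eq_preimage_swap]; rfl
          _ ≤ (Nat.card α - 1) + (Nat.card α - 1) :=
              (Set.ncard_union_le _ _).trans
                (add_le_add hcout ((Set.ncard_image_le (Set.toFinite _)).trans hcin))
          _ = 2 * (Nat.card α - 1) := by ring

end Relation

namespace Dgraph

open Relation

variable {V : Type} {D : Dgraph V} {p : ℕ}

/-- `p` pairwise arc-disjoint strong spanning subdigraphs of `D`, given by their arc relations. -/
structure IsStrongPacking (D : Dgraph V) (T : Fin p → V → V → Prop) : Prop where
  le_arc : ∀ i, T i ≤ D.Arc
  strong : ∀ i u v, ReflTransGen (T i) u v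
  disjoint : ∀ i j, i ≠ j → ∀ u v, T i u v → ¬ T j u v

namespace IsStrongPacking

variable {T : Fin p → V → V → Prop}

theorem castLE (hT : D.IsStrongPacking T) {q : ℕ} (hqp : q ≤ p) :
    D.IsStrongPacking fun i => T (Fin.castLE hqp i) where
  le_arc i := hT.le_arc (Fin.castLE hqp i)
  strong i := hT.strong (Fin.castLE hqp i)
  disjoint _ _ hij := hT.disjoint _ _ fun h => hij (Fin.castLE_injective hqp h)

theorem mono (hT : D.IsStrongPacking T) {S : Fin p → V → V → Prop} (hST : ∀ i, S i ≤ T i)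
    (hS : ∀ i u v, ReflTransGen (S i) u v) : D.IsStrongPacking S where
  le_arc i := (hST i).trans (hT.le_arc i)
  strong := hS
  disjoint i j hij u v hi hj := hT.disjoint i j hij u v (hST i u v hi) (hST j u v hj)

theorem deleteArc (hT : D.IsStrongPacking T) {u v : V} (huv : ∀ i, ¬ T i u v) :
    (D.deleteArc (u, v)).IsStrongPacking T where
  le_arc i a b hab := ⟨hT.le_arc i a b hab, by rintro ⟨⟩; exact huv i hab⟩
  strong := hT.strong
  disjoint := hT.disjoint

theorem le_arcCount [Finite V] [Nontrivial V] (hT : D.IsStrongPacking T) : p ≤ D.arcCount := by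
  obtain ⟨u, v, huv⟩ := exists_pair_ne V
  have harc : ∀ i, ∃ e : V × V, T i e.1 e.2 := fun i => by
    rcases (hT.strong i u v).cases_head with rfl | ⟨w, huw, -⟩
    · exact absurd rfl huv
    · exact ⟨(u, w), huw⟩
  choose e he using harc
  have hinj : Function.Injective fun i => (⟨e i, hT.le_arc i _ _ (he i)⟩ :
      {e : V × V // D.Arc e.1 e.2}) := by
    intro i j hij
    by_contra hne
    have hij : e i = e j := congrArg Subtype.val hij
    exact hT.disjoint i j hne _ _ (he i) (hij ▸ he j)
  calc p = Nat.card (Fin p) := (Nat.card_fin p).symm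
    _ ≤ D.arcCount := Nat.card_le_card_of_injective _ hinj

end IsStrongPacking

theorem kappa_card_eq_kappaS_univ [Fintype V] (D : Dgraph V) :
    D.kappa (Fintype.card V) = D.kappaS Set.univ := by
  have : {m | ∃ S : Finset V, S.card = Fintype.card V ∧ D.kappaS S = m} =
      {D.kappaS Set.univ} := by
    ext m
    simp [Finset.card_eq_iff_eq_univ, eq_comm]
  rw [kappa, this, csInf_singleton]

theorem kappaS_univ_eq (D : Dgraph V) :
    D.kappaS Set.univ = sSup {p | ∃ T : Fin p → V → V → Prop, D.IsStrongPacking T} := by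
  rw [kappaS]
  congr 1
  ext p
  constructor
  · rintro ⟨f, hf, -, hdisj⟩
    refine ⟨fun i => (f i).Arc, fun i => (f i).arc_sub, ?_, ?_⟩
    · exact fun i u v => (f i).strong u (hf i trivial) v (hf i trivial)
    · exact fun i j hij u v hi hj => hdisj i j hij u v ⟨hi, hj⟩
  · rintro ⟨T, hT⟩
    refine ⟨fun i => ⟨Set.univ, T i, hT.le_arc i, fun _ _ _ => ⟨trivial, trivial⟩,
      fun u _ v _ => hT.strong i u v⟩, fun _ => subset_rfl, fun _ _ _ => Set.inter_self _, ?_⟩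
    exact fun i j hij u v h => hT.disjoint i j hij u v h.1 h.2

theorem le_kappa_card_iff [Fintype V] [Nontrivial V] :
    p ≤ D.kappa (Fintype.card V) ↔ ∃ T : Fin p → V → V → Prop, D.IsStrongPacking T := by
  rw [kappa_card_eq_kappaS_univ, kappaS_univ_eq]
  -- with a single vertex this set would be unbounded, making `sSup` a junk `0`
  have hbdd : BddAbove {p | ∃ T : Fin p → V → V → Prop, D.IsStrongPacking T} :=
    ⟨D.arcCount, fun _ ⟨_, hT⟩ => hT.le_arcCount⟩
  have hne : {p | ∃ T : Fin p → V → V → Prop, D.IsStrongPacking T}.Nonempty :=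
    ⟨0, Fin.elim0, fun i => i.elim0, fun i => i.elim0, fun i => i.elim0⟩
  constructor
  · intro hp
    obtain ⟨T, hT⟩ := Nat.sSup_mem hne hbdd
    exact ⟨_, hT.castLE hp⟩
  · rintro ⟨T, hT⟩
    exact le_csSup hbdd ⟨T, hT⟩

theorem arcCount_eq_ncard (D : Dgraph V) : D.arcCount = {e : V × V | D.Arc e.1 e.2}.ncard :=
  Nat.card_coe_set_eq _

theorem arcCount_eq_zero [Subsingleton V] (D : Dgraph V) : D.arcCount = 0 := by
  rw [arcCount_eq_ncard, Set.ncard_eq_zero]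
  refine Set.eq_empty_of_forall_notMem fun ⟨u, v⟩ huv => ?_
  obtain rfl := Subsingleton.elim u v
  exact D.loopless u huv

theorem arcCount_le_sum_of_cover [Finite V] {T : Fin p → V → V → Prop}
    (hcover : ∀ u v, D.Arc u v → ∃ i, T i u v) :
    D.arcCount ≤ ∑ i, {e : V × V | T i e.1 e.2}.ncard := by
  rw [arcCount_eq_ncard]
  refine (Set.ncard_le_ncard ?_ (Set.toFinite _)).trans (Set.ncard_iUnion_le_of_fintype _)
  intro e he
  simpa using hcover e.1 e.2 he

end Dgraph

/-- Every minimally strong subgraph `(n,ℓ)`-connected digraph on `n` vertices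
has at most `2ℓ(n-1)` arcs. -/
theorem stmt18 {V : Type} [Fintype V] (D : Dgraph V) (n ℓ : ℕ)
    (hn : Fintype.card V = n) (hl : 1 ≤ ℓ) (hD : D.MinSSC n ℓ) :
    D.arcCount ≤ 2 * ℓ * (n - 1) := by
  subst hn
  cases subsingleton_or_nontrivial V with
  | inl _ => simp [D.arcCount_eq_zero]
  | inr _ =>
    obtain ⟨T, hT⟩ := Dgraph.le_kappa_card_iff.mp hD.1
    choose S hST hS hScard using fun i => Relation.exists_sparse_strong (hT.strong i)
    have hcover : ∀ u v, D.Arc u v → ∃ i, S i u v := by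
      by_contra! ⟨u, v, huv, hnone⟩
      have hdel := Dgraph.le_kappa_card_iff.mpr ⟨S, (hT.mono hST hS).deleteArc hnone⟩
      have := hD.2 (u, v) huv
      omega
    calc D.arcCount ≤ ∑ i, {e : V × V | S i e.1 e.2}.ncard :=
          Dgraph.arcCount_le_sum_of_cover hcover
      _ ≤ ∑ _i : Fin ℓ, 2 * (Fintype.card V - 1) := by
          gcongr with i
          simpa [Nat.card_eq_fintype_card] using hScard i
      _ = 2 * ℓ * (Fintype.card V - 1) := by
          simp only [Finset.sum_const, Finset.card_univ, Fintype.card_fin, smul_eq_mul]; ring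
end
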